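/- Define D̂ = λ(Σ12² + Σ13²) + 2Σ12Σ13. Along any solution of the tilted Bianchi type VI_{-1/9} system (i.e. at any point satisfying the constraint equations (C1)–(C5)), one has the identity D̂' = 2(q − 2 − 3Σ+ − √3·λΣ23 + 3A v1)·D̂. In particular, the set {D̂ = 0} is invariant under the flow. -/

import Mathlib

noncomputable section

namespace BianchiVI

/-- squared tilt speed `V² = v1² + v2² + v3²`. -/
def Vsq (v1 v2 v3 : ℝ) : ℝ := v1^2 + v2^2 + v3^2

/-- `G₊ = 1 + (γ-1) V²`. -/
def Gp (γ v1 v2 v3 : ℝ) : ℝ := 1 + (γ - 1) * Vsq v1 v2 v3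

/-- total shear `Σ²`. -/
def Sig2 (sp sm s12 s13 s23 : ℝ) : ℝ := sp^2 + sm^2 + s12^2 + s13^2 + s23^2

/-- deceleration parameter `q`. -/
def qdef (γ sp sm s12 s13 s23 Om v1 v2 v3 : ℝ) : ℝ :=
  2 * Sig2 sp sm s12 s13 s23
    + (1/2) * ((3*γ - 2) + (2 - γ) * Vsq v1 v2 v3) * Om / Gp γ v1 v2 v3

/-- `P = Σ_{ab} v^a v^b · V²`, so that `S = P/V²`. -/
def Pdef (sp sm s12 s13 s23 v1 v2 v3 : ℝ) : ℝ :=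
  -2*sp*v1^2 + (sp + Real.sqrt 3 * sm) * v2^2 + (sp - Real.sqrt 3 * sm) * v3^2
    + 2*Real.sqrt 3*(s12*v1*v2 + s13*v1*v3 + s23*v2*v3)

/-- `S = Σ_{ab} c^a c^b`. -/
def Sdef (sp sm s12 s13 s23 v1 v2 v3 : ℝ) : ℝ :=
  if 0 < Vsq v1 v2 v3 then Pdef sp sm s12 s13 s23 v1 v2 v3 / Vsq v1 v2 v3 else 0

/-- the quantity `T`. -/
def Tdef (γ sp sm s12 s13 s23 A v1 v2 v3 : ℝ) : ℝ :=
  (((3*γ - 4) - 2*(γ-1)*A*v1) * (1 - Vsq v1 v2 v3)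
      + (2 - γ) * Pdef sp sm s12 s13 s23 v1 v2 v3)
    / (1 - (γ - 1) * Vsq v1 v2 v3)

/-- right-hand side of the evolution equation. -/
def rhsSp (γ sp sm s12 s13 s23 N lam A Om v1 v2 v3 : ℝ) : ℝ :=
  (qdef γ sp sm s12 s13 s23 Om v1 v2 v3 - 2) * sp + 3*(s12^2 + s13^2) - 2*N^2 + (γ*Om/(2*(Gp γ v1 v2 v3))) * (-2*v1^2 + v2^2 + v3^2)

/-- right-hand side of the evolution equation. -/
def rhsSm (γ sp sm s12 s13 s23 N lam A Om v1 v2 v3 : ℝ) : ℝ :=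
  (qdef γ sp sm s12 s13 s23 Om v1 v2 v3 - 2 - 2*Real.sqrt 3*s23*lam) * sm + Real.sqrt 3*(s12^2 - s13^2) + 2*A*N + (Real.sqrt 3*γ*Om/(2*(Gp γ v1 v2 v3))) * (v2^2 - v3^2)

/-- right-hand side of the evolution equation. -/
def rhsS12 (γ sp sm s12 s13 s23 N lam A Om v1 v2 v3 : ℝ) : ℝ :=
  (qdef γ sp sm s12 s13 s23 Om v1 v2 v3 - 2 - 3*sp - Real.sqrt 3*sm) * s12 - Real.sqrt 3*(s23 + sm*lam)*s13 + (Real.sqrt 3*γ*Om/(Gp γ v1 v2 v3))*v1*v2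

/-- right-hand side of the evolution equation. -/
def rhsS13 (γ sp sm s12 s13 s23 N lam A Om v1 v2 v3 : ℝ) : ℝ :=
  (qdef γ sp sm s12 s13 s23 Om v1 v2 v3 - 2 - 3*sp + Real.sqrt 3*sm) * s13 - Real.sqrt 3*(s23 - sm*lam)*s12 + (Real.sqrt 3*γ*Om/(Gp γ v1 v2 v3))*v1*v3

/-- right-hand side of the evolution equation. -/
def rhsS23 (γ sp sm s12 s13 s23 N lam A Om v1 v2 v3 : ℝ) : ℝ :=
  (qdef γ sp sm s12 s13 s23 Om v1 v2 v3 - 2) * s23 - 2*Real.sqrt 3*N^2*lam + 2*Real.sqrt 3*lam*sm^2 + 2*Real.sqrt 3*s12*s13 + (Real.sqrt 3*γ*Om/(Gp γ v1 v2 v3))*v2*v3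

/-- right-hand side of the evolution equation. -/
def rhsN (γ sp sm s12 s13 s23 N lam A Om v1 v2 v3 : ℝ) : ℝ :=
  (qdef γ sp sm s12 s13 s23 Om v1 v2 v3 + 2*sp + 2*Real.sqrt 3*s23*lam) * N

/-- right-hand side of the evolution equation. -/
def rhsLam (γ sp sm s12 s13 s23 N lam A Om v1 v2 v3 : ℝ) : ℝ :=
  2*Real.sqrt 3*s23*(1 - lam^2)

/-- right-hand side of the evolution equation. -/
def rhsA (γ sp sm s12 s13 s23 N lam A Om v1 v2 v3 : ℝ) : ℝ :=
  (qdef γ sp sm s12 s13 s23 Om v1 v2 v3 + 2*sp) * A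

/-- right-hand side of the evolution equation. -/
def rhsOm (γ sp sm s12 s13 s23 N lam A Om v1 v2 v3 : ℝ) : ℝ :=
  (Om/(Gp γ v1 v2 v3)) * (2*(qdef γ sp sm s12 s13 s23 Om v1 v2 v3) - (3*γ-2) + 2*γ*A*v1 + (2*(qdef γ sp sm s12 s13 s23 Om v1 v2 v3)*(γ-1) - (2-γ)) * Vsq v1 v2 v3 - γ*(Pdef sp sm s12 s13 s23 v1 v2 v3))

/-- right-hand side of the evolution equation. -/
def rhsV1 (γ sp sm s12 s13 s23 N lam A Om v1 v2 v3 : ℝ) : ℝ :=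
  ((Tdef γ sp sm s12 s13 s23 A v1 v2 v3) + 2*sp)*v1 - 2*Real.sqrt 3*s13*v3 - 2*Real.sqrt 3*s12*v2 - A*(v2^2 + v3^2) - Real.sqrt 3*N*(v2^2 - v3^2)

/-- right-hand side of the evolution equation. -/
def rhsV2 (γ sp sm s12 s13 s23 N lam A Om v1 v2 v3 : ℝ) : ℝ :=
  ((Tdef γ sp sm s12 s13 s23 A v1 v2 v3) - sp - Real.sqrt 3*sm)*v2 - Real.sqrt 3*(s23 + sm*lam)*v3 + Real.sqrt 3*lam*N*v1*v3 + (A + Real.sqrt 3*N)*v1*v2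

/-- right-hand side of the evolution equation. -/
def rhsV3 (γ sp sm s12 s13 s23 N lam A Om v1 v2 v3 : ℝ) : ℝ :=
  ((Tdef γ sp sm s12 s13 s23 A v1 v2 v3) - sp + Real.sqrt 3*sm)*v3 - Real.sqrt 3*(s23 - sm*lam)*v2 - Real.sqrt 3*lam*N*v1*v2 + (A - Real.sqrt 3*N)*v1*v3

/-- the five constraint equations (C1)-(C5). -/
def SatisfiesConstraints (γ sp sm s12 s13 s23 N lam A Om v1 v2 v3 : ℝ) : Prop :=
  Sig2 sp sm s12 s13 s23 + A^2 + N^2 + Om = 1 ∧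
  2*sp*A + 2*sm*N + γ*Om*v1/(Gp γ v1 v2 v3) = 0 ∧
  -(s12*(N + Real.sqrt 3*A) + s13*lam*N) + γ*Om*v2/(Gp γ v1 v2 v3) = 0 ∧
  s13*(N - Real.sqrt 3*A) + s12*lam*N + γ*Om*v3/(Gp γ v1 v2 v3) = 0 ∧
  3*A^2 = (1 - lam^2)*N^2

/-- equilibrium point: all twelve right-hand sides vanish. -/
def IsEquilibrium (γ sp sm s12 s13 s23 N lam A Om v1 v2 v3 : ℝ) : Prop :=
  rhsSp γ sp sm s12 s13 s23 N lam A Om v1 v2 v3 = 0 ∧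
  rhsSm γ sp sm s12 s13 s23 N lam A Om v1 v2 v3 = 0 ∧
  rhsS12 γ sp sm s12 s13 s23 N lam A Om v1 v2 v3 = 0 ∧
  rhsS13 γ sp sm s12 s13 s23 N lam A Om v1 v2 v3 = 0 ∧
  rhsS23 γ sp sm s12 s13 s23 N lam A Om v1 v2 v3 = 0 ∧
  rhsN γ sp sm s12 s13 s23 N lam A Om v1 v2 v3 = 0 ∧
  rhsLam γ sp sm s12 s13 s23 N lam A Om v1 v2 v3 = 0 ∧
  rhsA γ sp sm s12 s13 s23 N lam A Om v1 v2 v3 = 0 ∧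
  rhsOm γ sp sm s12 s13 s23 N lam A Om v1 v2 v3 = 0 ∧
  rhsV1 γ sp sm s12 s13 s23 N lam A Om v1 v2 v3 = 0 ∧
  rhsV2 γ sp sm s12 s13 s23 N lam A Om v1 v2 v3 = 0 ∧
  rhsV3 γ sp sm s12 s13 s23 N lam A Om v1 v2 v3 = 0

/-- a solution of the tilted Bianchi type VI_(-1/9) system on the set `dom`:
the twelve evolution equations and the five constraints hold at every `τ ∈ dom`. -/
def IsSolutionOn (γ : ℝ) (dom : Set ℝ) (sp sm s12 s13 s23 N lam A Om v1 v2 v3 : ℝ → ℝ) : Prop :=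
  ∀ τ ∈ dom,
    (HasDerivAt sp (rhsSp γ (sp τ) (sm τ) (s12 τ) (s13 τ) (s23 τ) (N τ) (lam τ) (A τ) (Om τ) (v1 τ) (v2 τ) (v3 τ)) τ ∧
    HasDerivAt sm (rhsSm γ (sp τ) (sm τ) (s12 τ) (s13 τ) (s23 τ) (N τ) (lam τ) (A τ) (Om τ) (v1 τ) (v2 τ) (v3 τ)) τ ∧
    HasDerivAt s12 (rhsS12 γ (sp τ) (sm τ) (s12 τ) (s13 τ) (s23 τ) (N τ) (lam τ) (A τ) (Om τ) (v1 τ) (v2 τ) (v3 τ)) τ ∧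
    HasDerivAt s13 (rhsS13 γ (sp τ) (sm τ) (s12 τ) (s13 τ) (s23 τ) (N τ) (lam τ) (A τ) (Om τ) (v1 τ) (v2 τ) (v3 τ)) τ ∧
    HasDerivAt s23 (rhsS23 γ (sp τ) (sm τ) (s12 τ) (s13 τ) (s23 τ) (N τ) (lam τ) (A τ) (Om τ) (v1 τ) (v2 τ) (v3 τ)) τ ∧
    HasDerivAt N (rhsN γ (sp τ) (sm τ) (s12 τ) (s13 τ) (s23 τ) (N τ) (lam τ) (A τ) (Om τ) (v1 τ) (v2 τ) (v3 τ)) τ ∧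
    HasDerivAt lam (rhsLam γ (sp τ) (sm τ) (s12 τ) (s13 τ) (s23 τ) (N τ) (lam τ) (A τ) (Om τ) (v1 τ) (v2 τ) (v3 τ)) τ ∧
    HasDerivAt A (rhsA γ (sp τ) (sm τ) (s12 τ) (s13 τ) (s23 τ) (N τ) (lam τ) (A τ) (Om τ) (v1 τ) (v2 τ) (v3 τ)) τ ∧
    HasDerivAt Om (rhsOm γ (sp τ) (sm τ) (s12 τ) (s13 τ) (s23 τ) (N τ) (lam τ) (A τ) (Om τ) (v1 τ) (v2 τ) (v3 τ)) τ ∧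
    HasDerivAt v1 (rhsV1 γ (sp τ) (sm τ) (s12 τ) (s13 τ) (s23 τ) (N τ) (lam τ) (A τ) (Om τ) (v1 τ) (v2 τ) (v3 τ)) τ ∧
    HasDerivAt v2 (rhsV2 γ (sp τ) (sm τ) (s12 τ) (s13 τ) (s23 τ) (N τ) (lam τ) (A τ) (Om τ) (v1 τ) (v2 τ) (v3 τ)) τ ∧
    HasDerivAt v3 (rhsV3 γ (sp τ) (sm τ) (s12 τ) (s13 τ) (s23 τ) (N τ) (lam τ) (A τ) (Om τ) (v1 τ) (v2 τ) (v3 τ)) τ) ∧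
    SatisfiesConstraints γ (sp τ) (sm τ) (s12 τ) (s13 τ) (s23 τ) (N τ) (lam τ) (A τ) (Om τ) (v1 τ) (v2 τ) (v3 τ)

/-- `D̂ = λ(Σ12² + Σ13²) + 2 Σ12 Σ13`. -/
def Dhat (lam s12 s13 : ℝ) : ℝ := lam*(s12^2 + s13^2) + 2*s12*s13

/-!
`D̂` is quadratic in `(Σ12, Σ13)` with a coefficient `λ`, so the product rule expresses `D̂'`
through the right-hand sides of `λ`, `Σ12`, `Σ13`; the matter terms `√3γΩvᵢ/G₊` occurring there
cancel against the constraints (C3), (C4), leaving a multiple `κ·D̂`.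

Invariance of `{D̂ = 0}` is then uniqueness for the scalar linear equation `f' = κ f`, which holds
as soon as `κ` is locally bounded. The only non-polynomial part of `κ` is `Ω/G₊` inside `q`. Where
`G₊ ≠ 0`, the constraints (C2)–(C4) turn `γΩvᵢ/G₊` into polynomials, and
`Ω/G₊ = Ω + (1 − γ)·ΩV²/G₊` becomes polynomial as well; where `G₊ = 0`, Lean's `x / 0 = 0` gives
`q = 2Σ²`. So `|κ|` is dominated by the sum of two continuous functions along the solution.
-/

theorem eq_zero_of_hasDerivAt_smul_self {E : Type*} [NormedAddCommGroup E] [NormedSpace ℝ E]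
    {f : ℝ → E} {c K : ℝ → ℝ} (hK : Continuous K) (hcK : ∀ t, |c t| ≤ K t)
    (hf : ∀ t, HasDerivAt f (c t • f t) t) {t₀ : ℝ} (h₀ : f t₀ = 0) (t : ℝ) : f t = 0 := by
  obtain ⟨a, b, ht, ht₀⟩ : ∃ a b, t ∈ Set.Ioo a b ∧ t₀ ∈ Set.Ioo a b :=
    ⟨min t t₀ - 1, max t t₀ + 1, by grind⟩
  obtain ⟨M, hM⟩ := (isCompact_Icc (a := a) (b := b)).exists_bound_of_continuousOn hK.continuousOn
  have hlip : ∀ s ∈ Set.Ioo a b, LipschitzOnWith M.toNNReal (fun x : E => c s • x) Set.univ := by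
    intro s hs
    refine ((lipschitzWith_smul (c s)).weaken ?_).lipschitzOnWith
    rw [← NNReal.coe_le_coe, coe_nnnorm, Real.coe_toNNReal']
    exact le_max_of_le_left <|
      (hcK s).trans <| (le_abs_self _).trans <| hM s (Set.Ioo_subset_Icc_self hs)
  exact ODE_solution_unique_of_mem_Ioo (g := 0) hlip ht₀ (fun s _ => ⟨hf s, trivial⟩)
    (fun s _ => ⟨by simp, trivial⟩) h₀ ht

theorem hasDerivAt_dhat {l a b : ℝ → ℝ} {l' a' b' τ : ℝ} (hl : HasDerivAt l l' τ)
    (ha : HasDerivAt a a' τ) (hb : HasDerivAt b b' τ) :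
    HasDerivAt (fun t => Dhat (l t) (a t) (b t))
      (l' * (a τ ^ 2 + b τ ^ 2) + l τ * (2 * a τ * a' + 2 * b τ * b')
        + 2 * (a' * b τ + a τ * b')) τ := by
  refine ((hl.mul ((ha.pow 2).add (hb.pow 2))).add ((ha.const_mul 2).mul hb)).congr_deriv ?_
  push_cast [Pi.add_apply, Pi.pow_apply]
  ring

theorem rhs_dhat_eq (γ sp sm s12 s13 s23 N lam A Om v1 v2 v3 : ℝ)
    (hc3 : -(s12*(N + Real.sqrt 3*A) + s13*lam*N) + γ*Om*v2/(Gp γ v1 v2 v3) = 0)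
    (hc4 : s13*(N - Real.sqrt 3*A) + s12*lam*N + γ*Om*v3/(Gp γ v1 v2 v3) = 0) :
    rhsLam γ sp sm s12 s13 s23 N lam A Om v1 v2 v3 * (s12 ^ 2 + s13 ^ 2)
      + lam * (2 * s12 * rhsS12 γ sp sm s12 s13 s23 N lam A Om v1 v2 v3
        + 2 * s13 * rhsS13 γ sp sm s12 s13 s23 N lam A Om v1 v2 v3)
      + 2 * (rhsS12 γ sp sm s12 s13 s23 N lam A Om v1 v2 v3 * s13
        + s12 * rhsS13 γ sp sm s12 s13 s23 N lam A Om v1 v2 v3)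
    = 2 * (qdef γ sp sm s12 s13 s23 Om v1 v2 v3 - 2 - 3*sp - Real.sqrt 3*lam*s23 + 3*A*v1)
        * Dhat lam s12 s13 := by
  have h3 : Real.sqrt 3 ^ 2 = 3 := Real.sq_sqrt (by norm_num)
  simp only [rhsLam, rhsS12, rhsS13, Dhat]
  linear_combination (2*Real.sqrt 3*v1*(lam*s12 + s13)) * hc3
    + (2*Real.sqrt 3*v1*(lam*s13 + s12)) * hc4 + (2*A*v1*(lam*(s12^2 + s13^2) + 2*s12*s13)) * h3

/-- The value of `γΩV²/G₊` dictated by (C2)–(C4). -/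
def tiltFlux (sp sm s12 s13 N lam A v1 v2 v3 : ℝ) : ℝ :=
  -(2*sp*A + 2*sm*N) * v1 + (s12*(N + Real.sqrt 3*A) + s13*lam*N) * v2
    - (s13*(N - Real.sqrt 3*A) + s12*lam*N) * v3

def qPoly (γ sp sm s12 s13 s23 N lam A Om v1 v2 v3 : ℝ) : ℝ :=
  2 * Sig2 sp sm s12 s13 s23 + (1/2) * ((3*γ - 2) + (2 - γ) * Vsq v1 v2 v3)
    * (Om + (1 - γ) / γ * tiltFlux sp sm s12 s13 N lam A v1 v2 v3)

theorem Om_div_Gp_eq (γ sp sm s12 s13 N lam A Om v1 v2 v3 : ℝ) (hγ : γ ≠ 0)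
    (hG : Gp γ v1 v2 v3 ≠ 0)
    (hc2 : 2*sp*A + 2*sm*N + γ*Om*v1/(Gp γ v1 v2 v3) = 0)
    (hc3 : -(s12*(N + Real.sqrt 3*A) + s13*lam*N) + γ*Om*v2/(Gp γ v1 v2 v3) = 0)
    (hc4 : s13*(N - Real.sqrt 3*A) + s12*lam*N + γ*Om*v3/(Gp γ v1 v2 v3) = 0) :
    Om / Gp γ v1 v2 v3 = Om + (1 - γ) / γ * tiltFlux sp sm s12 s13 N lam A v1 v2 v3 := by
  have hflux : tiltFlux sp sm s12 s13 N lam A v1 v2 v3 = γ * Om * Vsq v1 v2 v3 / Gp γ v1 v2 v3 := by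
    simp only [tiltFlux, Vsq]
    linear_combination (-v1) * hc2 - v2 * hc3 - v3 * hc4
  rw [hflux]
  field_simp
  simp only [Gp]
  ring

theorem qdef_eq_qPoly_or_eq (γ sp sm s12 s13 s23 N lam A Om v1 v2 v3 : ℝ) (hγ : γ ≠ 0)
    (hc2 : 2*sp*A + 2*sm*N + γ*Om*v1/(Gp γ v1 v2 v3) = 0)
    (hc3 : -(s12*(N + Real.sqrt 3*A) + s13*lam*N) + γ*Om*v2/(Gp γ v1 v2 v3) = 0)
    (hc4 : s13*(N - Real.sqrt 3*A) + s12*lam*N + γ*Om*v3/(Gp γ v1 v2 v3) = 0) :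
    qdef γ sp sm s12 s13 s23 Om v1 v2 v3 = qPoly γ sp sm s12 s13 s23 N lam A Om v1 v2 v3 ∨
      qdef γ sp sm s12 s13 s23 Om v1 v2 v3 = 2 * Sig2 sp sm s12 s13 s23 := by
  by_cases hG : Gp γ v1 v2 v3 = 0
  · right
    simp only [qdef, hG, div_zero, add_zero]
  · left
    rw [qdef, qPoly, mul_div_assoc, Om_div_Gp_eq γ sp sm s12 s13 N lam A Om v1 v2 v3 hγ hG hc2 hc3 hc4]

theorem continuous_of_isSolutionOn_univ {γ : ℝ} {sp sm s12 s13 s23 N lam A Om v1 v2 v3 : ℝ → ℝ}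
    (hsol : IsSolutionOn γ Set.univ sp sm s12 s13 s23 N lam A Om v1 v2 v3) :
    Continuous sp ∧ Continuous sm ∧ Continuous s12 ∧ Continuous s13 ∧ Continuous s23 ∧
      Continuous N ∧ Continuous lam ∧ Continuous A ∧ Continuous Om ∧ Continuous v1 ∧
      Continuous v2 ∧ Continuous v3 := by
  simp only [continuous_iff_continuousAt]
  refine ⟨?_, ?_, ?_, ?_, ?_, ?_, ?_, ?_, ?_, ?_, ?_, ?_⟩ <;> intro t <;>
    obtain ⟨⟨_, _, _, _, _, _, _, _, _, _, _, _⟩, -⟩ := hsol t trivial <;>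
    exact HasDerivAt.continuousAt (by assumption)

theorem dhat_evolution_and_invariance (γ : ℝ) (hγ : 0 < γ ∧ γ < 2)
    (sp sm s12 s13 s23 N lam A Om v1 v2 v3 : ℝ → ℝ)
    (hsol : IsSolutionOn γ Set.univ sp sm s12 s13 s23 N lam A Om v1 v2 v3) :
    (∀ τ : ℝ, HasDerivAt (fun t => Dhat (lam t) (s12 t) (s13 t))
        (2 * (qdef γ (sp τ) (sm τ) (s12 τ) (s13 τ) (s23 τ) (Om τ) (v1 τ) (v2 τ) (v3 τ) - 2 - 3*(sp τ)
            - Real.sqrt 3*(lam τ)*(s23 τ) + 3*(A τ)*(v1 τ))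
          * Dhat (lam τ) (s12 τ) (s13 τ)) τ) ∧
    (∀ τ₀ : ℝ, Dhat (lam τ₀) (s12 τ₀) (s13 τ₀) = 0 →
      ∀ τ : ℝ, Dhat (lam τ) (s12 τ) (s13 τ) = 0) := by
  set rate : ℝ → ℝ → ℝ := fun q τ =>
    2 * (q - 2 - 3*(sp τ) - Real.sqrt 3*(lam τ)*(s23 τ) + 3*(A τ)*(v1 τ))
  have hderiv : ∀ τ, HasDerivAt (fun t => Dhat (lam t) (s12 t) (s13 t))
      (rate (qdef γ (sp τ) (sm τ) (s12 τ) (s13 τ) (s23 τ) (Om τ) (v1 τ) (v2 τ) (v3 τ)) τ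
        * Dhat (lam τ) (s12 τ) (s13 τ)) τ := by
    intro τ
    obtain ⟨⟨-, -, h12, h13, -, -, hlam, -⟩, -, -, hc3, hc4, -⟩ := hsol τ trivial
    exact (hasDerivAt_dhat hlam h12 h13).congr_deriv (rhs_dhat_eq _ _ _ _ _ _ _ _ _ _ _ _ _ hc3 hc4)
  refine ⟨hderiv, fun τ₀ h₀ => eq_zero_of_hasDerivAt_smul_self
    (K := fun t => |rate (qPoly γ (sp t) (sm t) (s12 t) (s13 t) (s23 t) (N t) (lam t) (A t) (Om t)
      (v1 t) (v2 t) (v3 t)) t| + |rate (2 * Sig2 (sp t) (sm t) (s12 t) (s13 t) (s23 t)) t|)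
    ?_ ?_ hderiv h₀⟩
  · obtain ⟨_, _, _, _, _, _, _, _, _, _, _, _⟩ := continuous_of_isSolutionOn_univ hsol
    simp only [rate, qPoly, tiltFlux, Sig2, Vsq]
    fun_prop
  · intro t
    obtain ⟨-, -, hc2, hc3, hc4, -⟩ := hsol t trivial
    rcases qdef_eq_qPoly_or_eq γ _ _ _ _ _ _ _ _ _ _ _ _ hγ.1.ne' hc2 hc3 hc4 with h | h <;>
      rw [h] <;> simp only [le_add_iff_nonneg_left, le_add_iff_nonneg_right, abs_nonneg]

end BianchiVI
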